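/- arXiv:1210.0180 — 7 statements merged into one kernel-verified Lean document; each statement's English description precedes it below -/
import Mathlib

section
/- Let P, U, D ∈ ℝ^{n×n} with P symmetric negative definite, U symmetric positive definite block-diagonal of the form U = diag(U₁₁, U₂₂) with U₁₁ ∈ ℝ^{m×m}, and D of the block form D = [[D₁₁, 0],[0, 0]] where D₁₁ ∈ ℝ^{m×m} is nonsingular. Then P + D U Dᵗ ⪯ 0 if and only if −Dᵗ P⁻¹ D − U⁻¹ ⪯ 0. -/
/-!
Both conditions are Schur-complement forms of one block matrix: `[[-P, D], [Dᴴ, U⁻¹]]` is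
positive semidefinite iff its complement with respect to the positive definite block `U⁻¹`,
namely `-P - D U Dᴴ`, is, and iff its complement with respect to the positive definite block
`-P`, namely `U⁻¹ + Dᴴ P⁻¹ D`, is.
-/

open Matrix

namespace Matrix

variable {K m n : Type*} [Fintype m] [Fintype n] [DecidableEq m] [DecidableEq n]

theorem inv_neg_of_isUnit_det [CommRing K] {A : Matrix n n K} (hA : IsUnit A.det) :
    (-A)⁻¹ = -A⁻¹ :=
  inv_eq_right_inv <| by rw [neg_mul_neg, mul_nonsing_inv _ hA]

variable [Field K] [PartialOrder K] [StarRing K] [StarOrderedRing K]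

theorem posSemidef_neg_add_mul_mul_conjTranspose_iff {P : Matrix m m K} {U : Matrix n n K}
    (hP : (-P).PosDef) (hU : U.PosDef) (D : Matrix m n K) :
    (-(P + D * U * Dᴴ)).PosSemidef ↔ (Dᴴ * P⁻¹ * D + U⁻¹).PosSemidef := by
  have hUinv : U⁻¹.PosDef := hU.inv
  have : Invertible U⁻¹ := hUinv.isUnit.invertible
  have : Invertible (-P) := hP.isUnit.invertible
  have hPdet : IsUnit P.det := by
    simpa [isUnit_iff_isUnit_det] using hP.isUnit.neg
  calc (-(P + D * U * Dᴴ)).PosSemidef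
      ↔ (-P - D * U⁻¹⁻¹ * Dᴴ).PosSemidef := by
        rw [nonsing_inv_nonsing_inv _ ((isUnit_iff_isUnit_det _).mp hU.isUnit), neg_add']
    _ ↔ (fromBlocks (-P) D Dᴴ U⁻¹).PosSemidef := (PosDef.fromBlocks₂₂ _ _ hUinv).symm
    _ ↔ (U⁻¹ - Dᴴ * (-P)⁻¹ * D).PosSemidef := PosDef.fromBlocks₁₁ _ _ hP
    _ ↔ (Dᴴ * P⁻¹ * D + U⁻¹).PosSemidef := by
        rw [inv_neg_of_isUnit_det hPdet, Matrix.mul_neg, Matrix.neg_mul, sub_neg_eq_add, add_comm]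

end Matrix

theorem stmt_1_general {m k : ℕ}
    (P : Matrix (Fin m ⊕ Fin k) (Fin m ⊕ Fin k) ℝ)
    (U11 : Matrix (Fin m) (Fin m) ℝ) (U22 : Matrix (Fin k) (Fin k) ℝ)
    (D11 : Matrix (Fin m) (Fin m) ℝ)
    (hP : (-P).PosDef)
    (hU : (Matrix.fromBlocks U11 0 0 U22).PosDef) :
    let U : Matrix (Fin m ⊕ Fin k) (Fin m ⊕ Fin k) ℝ := Matrix.fromBlocks U11 0 0 U22
    let D : Matrix (Fin m ⊕ Fin k) (Fin m ⊕ Fin k) ℝ := Matrix.fromBlocks D11 0 0 0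
    ((-(P + D * U * Dᵀ)).PosSemidef ↔ (Dᵀ * P⁻¹ * D + U⁻¹).PosSemidef) := by
  intro U D
  rw [← conjTranspose_eq_transpose_of_trivial]
  exact posSemidef_neg_add_mul_mul_conjTranspose_iff hP hU D

theorem stmt_1 {m k : ℕ}
    (P : Matrix (Fin m ⊕ Fin k) (Fin m ⊕ Fin k) ℝ)
    (U11 : Matrix (Fin m) (Fin m) ℝ) (U22 : Matrix (Fin k) (Fin k) ℝ)
    (D11 : Matrix (Fin m) (Fin m) ℝ)
    (hP : (-P).PosDef)
    (hU : (Matrix.fromBlocks U11 0 0 U22).PosDef)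
    (hD11 : IsUnit D11.det) :
    let U : Matrix (Fin m ⊕ Fin k) (Fin m ⊕ Fin k) ℝ := Matrix.fromBlocks U11 0 0 U22
    let D : Matrix (Fin m ⊕ Fin k) (Fin m ⊕ Fin k) ℝ := Matrix.fromBlocks D11 0 0 0
    ((-(P + D * U * Dᵀ)).PosSemidef ↔ (Dᵀ * P⁻¹ * D + U⁻¹).PosSemidef) :=
  stmt_1_general P U11 U22 D11 hP hU
end

section
/- Define G(ς) = A + Σ_{i=1}^m τ_i B_i + Σ_{j=1}^p σ_j C_j for ς = (τ, σ), and the total complementary function Ξ(x, ς) = ½ xᵗG(ς)x − αᵗτ − θᵗσ − Σ_i(τ_i ln τ_i − τ_i) − Σ_j σ_j²/(2β_j) − fᵗx. Suppose ς̄ = (τ̄, σ̄) with τ̄_i > 0 for all i, G(ς̄) is invertible, and x̄ = G(ς̄)⁻¹f satisfies the criticality conditions ½x̄ᵗB_ix̄ − α_i = ln τ̄_i for all i and σ̄_j = β_j(½x̄ᵗC_jx̄ − θ_j) for all j. Then Π(x̄) = Ξ(x̄, ς̄), where Π(x) = Σ_i exp(½xᵗB_ix − α_i) + Σ_j (β_j/2)(½xᵗC_jx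 − θ_j)² + ½xᵗAx − fᵗx. -/
open Matrix Real

noncomputable def PiFun {n m p : ℕ} (A : Matrix (Fin n) (Fin n) ℝ)
    (B : Fin m → Matrix (Fin n) (Fin n) ℝ) (C : Fin p → Matrix (Fin n) (Fin n) ℝ)
    (α : Fin m → ℝ) (θ β : Fin p → ℝ) (f : Fin n → ℝ) (x : Fin n → ℝ) : ℝ :=
  (∑ i, Real.exp ((1/2) * (x ⬝ᵥ (B i *ᵥ x)) - α i)) +
  (∑ j, β j / 2 * ((1/2) * (x ⬝ᵥ (C j *ᵥ x)) - θ j) ^ 2) +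
  (1/2) * (x ⬝ᵥ (A *ᵥ x)) - f ⬝ᵥ x

noncomputable def Gmat {n m p : ℕ} (A : Matrix (Fin n) (Fin n) ℝ)
    (B : Fin m → Matrix (Fin n) (Fin n) ℝ) (C : Fin p → Matrix (Fin n) (Fin n) ℝ)
    (τ : Fin m → ℝ) (σ : Fin p → ℝ) : Matrix (Fin n) (Fin n) ℝ :=
  A + (∑ i, τ i • B i) + (∑ j, σ j • C j)

noncomputable def XiFun {n m p : ℕ} (A : Matrix (Fin n) (Fin n) ℝ)
    (B : Fin m → Matrix (Fin n) (Fin n) ℝ) (C : Fin p → Matrix (Fin n) (Fin n) ℝ)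
    (α : Fin m → ℝ) (θ β : Fin p → ℝ) (f : Fin n → ℝ)
    (x : Fin n → ℝ) (τ : Fin m → ℝ) (σ : Fin p → ℝ) : ℝ :=
  (1/2) * (x ⬝ᵥ ((Gmat A B C τ σ) *ᵥ x)) - (∑ i, α i * τ i) - (∑ j, θ j * σ j) -
  (∑ i, (τ i * Real.log (τ i) - τ i)) - (∑ j, (σ j) ^ 2 / (2 * β j)) - f ⬝ᵥ x

/-!
Expanding `G(ς)` writes `Ξ(x, ς)` as `½ xᵗAx - fᵗx` plus, for each `i`, the Fenchel–Young
expression `τᵢ sᵢ - (τᵢ ln τᵢ - τᵢ)` of `exp` at `sᵢ = ½ xᵗBᵢx - αᵢ`, and for each `j` that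
`σⱼ qⱼ - σⱼ²/(2βⱼ)` of `βⱼ q²/2` at `qⱼ = ½ xᵗCⱼx - θⱼ`. The criticality conditions say that each
dual variable is the derivative at the primal one (`τᵢ = exp sᵢ`, `σⱼ = βⱼ qⱼ`), which is exactly
the case of equality in Fenchel–Young, so `Ξ` and `Π` agree term by term.
-/

open Finset

theorem Matrix.dotProduct_sum_smul_mulVec {ι n R : Type*} [Fintype n] [CommSemiring R]
    (s : Finset ι) (c : ι → R) (M : ι → Matrix n n R) (x y : n → R) :
    x ⬝ᵥ ((∑ i ∈ s, c i • M i) *ᵥ y) = ∑ i ∈ s, c i * (x ⬝ᵥ (M i *ᵥ y)) := by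
  simp only [sum_mulVec, dotProduct_sum, smul_mulVec, dotProduct_smul, smul_eq_mul]

theorem Real.exp_eq_mul_sub_of_eq_log {s τ : ℝ} (hτ : 0 < τ) (hs : s = log τ) :
    exp s = τ * s - (τ * log τ - τ) := by
  rw [hs, exp_log hτ]
  ring

theorem div_two_mul_sq_eq_mul_sub_sq_div {β q σ : ℝ} (hσ : σ = β * q) :
    β / 2 * q ^ 2 = σ * q - σ ^ 2 / (2 * β) := by
  subst hσ
  rcases eq_or_ne β 0 with rfl | hβ
  · simp
  · field_simp
    ring

theorem XiFun_eq_sum_add {n m p : ℕ} (A : Matrix (Fin n) (Fin n) ℝ)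
    (B : Fin m → Matrix (Fin n) (Fin n) ℝ) (C : Fin p → Matrix (Fin n) (Fin n) ℝ)
    (α : Fin m → ℝ) (θ β : Fin p → ℝ) (f : Fin n → ℝ)
    (x : Fin n → ℝ) (τ : Fin m → ℝ) (σ : Fin p → ℝ) :
    XiFun A B C α θ β f x τ σ =
      (∑ i, (τ i * ((1/2) * (x ⬝ᵥ (B i *ᵥ x)) - α i) - (τ i * log (τ i) - τ i))) +
      (∑ j, (σ j * ((1/2) * (x ⬝ᵥ (C j *ᵥ x)) - θ j) - σ j ^ 2 / (2 * β j))) +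
      (1/2) * (x ⬝ᵥ (A *ᵥ x)) - f ⬝ᵥ x := by
  simp only [XiFun, Gmat, add_mulVec, dotProduct_add, dotProduct_sum_smul_mulVec, mul_sub,
    sum_sub_distrib, mul_add, mul_sum, mul_comm (α _), mul_comm (θ _),
    mul_left_comm (τ _) (1 / 2 : ℝ), mul_left_comm (σ _) (1 / 2 : ℝ)]
  ring

theorem stmt_6_general {n m p : ℕ} (A : Matrix (Fin n) (Fin n) ℝ)
    (B : Fin m → Matrix (Fin n) (Fin n) ℝ) (C : Fin p → Matrix (Fin n) (Fin n) ℝ)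
    (α : Fin m → ℝ) (θ β : Fin p → ℝ) (f : Fin n → ℝ)
    (τ : Fin m → ℝ) (σ : Fin p → ℝ) (hτ : ∀ i, 0 < τ i)
    (x : Fin n → ℝ)
    (h1 : ∀ i, (1/2) * (x ⬝ᵥ (B i *ᵥ x)) - α i = Real.log (τ i))
    (h2 : ∀ j, σ j = β j * ((1/2) * (x ⬝ᵥ (C j *ᵥ x)) - θ j)) :
    PiFun A B C α θ β f x = XiFun A B C α θ β f x τ σ := by
  rw [XiFun_eq_sum_add, PiFun]
  congr 3
  · exact sum_congr rfl fun i _ => exp_eq_mul_sub_of_eq_log (hτ i) (h1 i)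
  · exact sum_congr rfl fun j _ => div_two_mul_sq_eq_mul_sub_sq_div (h2 j)

theorem stmt_6 {n m p : ℕ} (A : Matrix (Fin n) (Fin n) ℝ)
    (B : Fin m → Matrix (Fin n) (Fin n) ℝ) (C : Fin p → Matrix (Fin n) (Fin n) ℝ)
    (hA : A.IsSymm) (hB : ∀ i, (B i).IsSymm) (hC : ∀ j, (C j).IsSymm)
    (α : Fin m → ℝ) (θ β : Fin p → ℝ) (hβ : ∀ j, 0 < β j) (f : Fin n → ℝ)
    (τ : Fin m → ℝ) (σ : Fin p → ℝ) (hτ : ∀ i, 0 < τ i)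
    (hG : IsUnit (Gmat A B C τ σ).det)
    (x : Fin n → ℝ) (hx : x = (Gmat A B C τ σ)⁻¹ *ᵥ f)
    (h1 : ∀ i, (1/2) * (x ⬝ᵥ (B i *ᵥ x)) - α i = Real.log (τ i))
    (h2 : ∀ j, σ j = β j * ((1/2) * (x ⬝ᵥ (C j *ᵥ x)) - θ j)) :
    PiFun A B C α θ β f x = XiFun A B C α θ β f x τ σ :=
  stmt_6_general A B C α θ β f τ σ hτ x h1 h2
end

section
/- With notation as in the canonical duality setting, if ς̄ = (τ̄, σ̄) is such that G(ς̄) is invertible and x̄ = G(ς̄)⁻¹f satisfies ½x̄ᵗB_ix̄ − α_i = ln τ̄_i for all i and β_j(½x̄ᵗC_jx̄ − θ_j) = σ̄_j for all j, then x̄ is a stationary point of Π, i.e., ∇Π(x̄) = 0. -/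
open Matrix Real

/-! The gradient of `Π` at `x` is `G(ς(x)) x - f`, where `τᵢ(x) = exp(½ xᵗBᵢx - αᵢ)` and
`σⱼ(x) = βⱼ(½ xᵗCⱼx - θⱼ)` are the canonical dual variables of `x`. The hypotheses say exactly
that `ς(x̄) = ς̄`, so the gradient at `x̄` is `G(ς̄) x̄ - f = 0`. -/

section QuadraticForm

variable {ι : Type*} [Fintype ι]

noncomputable def dotProductCLM : (ι → ℝ) →ₗ[ℝ] (ι → ℝ) →L[ℝ] ℝ :=
  LinearMap.toContinuousLinearMap.toLinearMap ∘ₗ dotProductBilin ℝ ℝ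

@[simp] lemma dotProductCLM_apply (v w : ι → ℝ) : dotProductCLM v w = v ⬝ᵥ w := rfl

lemma hasFDerivAt_half_dotProduct_mulVec {M : Matrix ι ι ℝ} (hM : M.IsSymm) (x : ι → ℝ) :
    HasFDerivAt (fun y => (1/2) * (y ⬝ᵥ (M *ᵥ y))) (dotProductCLM (M *ᵥ x)) x := by
  have hbil := (LinearMap.toContinuousLinearMap (dotProductCLM (ι := ι))).hasFDerivAt_of_bilinear
    (hasFDerivAt_id x) (LinearMap.toContinuousLinearMap M.mulVecLin).hasFDerivAt
  refine (hbil.const_mul (1/2)).congr_fderiv ?_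
  ext v
  simp only [one_div, id_eq, ContinuousLinearMap.precompR_apply,
    LinearMap.coe_toContinuousLinearMap', ContinuousLinearMap.compL_apply, mulVecBilin_apply,
    smul_add, _root_.add_apply, _root_.smul_apply, ContinuousLinearMap.comp_apply,
    dotProductCLM_apply, smul_eq_mul, ContinuousLinearMap.precompL_apply,
    ContinuousLinearMap.id_apply]
  -- `x ⬝ᵥ M v = Mᵗx ⬝ᵥ v`, so symmetry merges the two halves of the product rule
  rw [dotProduct_mulVec, ← mulVec_transpose, hM, dotProduct_comm v]
  ring

end QuadraticForm

theorem hasFDerivAt_piFun {n m p : ℕ} {A : Matrix (Fin n) (Fin n) ℝ}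
    {B : Fin m → Matrix (Fin n) (Fin n) ℝ} {C : Fin p → Matrix (Fin n) (Fin n) ℝ}
    (hA : A.IsSymm) (hB : ∀ i, (B i).IsSymm) (hC : ∀ j, (C j).IsSymm)
    (α : Fin m → ℝ) (θ β : Fin p → ℝ) (f x : Fin n → ℝ) :
    HasFDerivAt (PiFun A B C α θ β f)
      (dotProductCLM (Gmat A B C (fun i => exp ((1/2) * (x ⬝ᵥ (B i *ᵥ x)) - α i))
        (fun j => β j * ((1/2) * (x ⬝ᵥ (C j *ᵥ x)) - θ j)) *ᵥ x - f)) x := by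
  have hexp (i : Fin m) : HasFDerivAt (fun y => exp ((1/2) * (y ⬝ᵥ (B i *ᵥ y)) - α i))
      (exp ((1/2) * (x ⬝ᵥ (B i *ᵥ x)) - α i) • dotProductCLM (B i *ᵥ x)) x :=
    ((hasFDerivAt_half_dotProduct_mulVec (hB i) x).sub_const (α i)).exp
  have hsq (j : Fin p) : HasFDerivAt (fun y => β j / 2 * ((1/2) * (y ⬝ᵥ (C j *ᵥ y)) - θ j) ^ 2)
      ((β j * ((1/2) * (x ⬝ᵥ (C j *ᵥ x)) - θ j)) • dotProductCLM (C j *ᵥ x)) x := by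
    refine ((((hasFDerivAt_half_dotProduct_mulVec (hC j) x).sub_const (θ j)).pow 2).const_mul
      (β j / 2)).congr_fderiv ?_
    rw [smul_smul]
    congr 1
    simp only [Nat.add_one_sub_one, pow_one, nsmul_eq_mul, Nat.cast_ofNat]
    ring
  have hPi := (((HasFDerivAt.fun_sum (u := Finset.univ) fun i _ => hexp i).add
    (HasFDerivAt.fun_sum (u := Finset.univ) fun j _ => hsq j)).add
    (hasFDerivAt_half_dotProduct_mulVec hA x)).sub (dotProductCLM f).hasFDerivAt
  refine hPi.congr_fderiv ?_
  simp only [one_div, Gmat, add_mulVec, sum_mulVec, smul_mulVec, map_sub, map_add, map_sum,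
    map_smul]
  abel

theorem stmt_7_general {n m p : ℕ} (A : Matrix (Fin n) (Fin n) ℝ)
    (B : Fin m → Matrix (Fin n) (Fin n) ℝ) (C : Fin p → Matrix (Fin n) (Fin n) ℝ)
    (hA : A.IsSymm) (hB : ∀ i, (B i).IsSymm) (hC : ∀ j, (C j).IsSymm)
    (α : Fin m → ℝ) (θ β : Fin p → ℝ) (f : Fin n → ℝ)
    (τ : Fin m → ℝ) (σ : Fin p → ℝ) (hτ : ∀ i, 0 < τ i)
    (hG : IsUnit (Gmat A B C τ σ).det)
    (x : Fin n → ℝ) (hx : x = (Gmat A B C τ σ)⁻¹ *ᵥ f)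
    (h1 : ∀ i, (1/2) * (x ⬝ᵥ (B i *ᵥ x)) - α i = Real.log (τ i))
    (h2 : ∀ j, β j * ((1/2) * (x ⬝ᵥ (C j *ᵥ x)) - θ j) = σ j) :
    HasFDerivAt (PiFun A B C α θ β f) (0 : (Fin n → ℝ) →L[ℝ] ℝ) x := by
  have hτx : (fun i => exp ((1/2) * (x ⬝ᵥ (B i *ᵥ x)) - α i)) = τ :=
    funext fun i => by rw [h1 i, exp_log (hτ i)]
  have hGx : Gmat A B C τ σ *ᵥ x = f := by
    rw [hx, mulVec_mulVec, mul_nonsing_inv _ hG, one_mulVec]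
  have hPi := hasFDerivAt_piFun hA hB hC α θ β f x
  rwa [hτx, funext h2, hGx, sub_self, map_zero] at hPi

theorem stmt_7 {n m p : ℕ} (A : Matrix (Fin n) (Fin n) ℝ)
    (B : Fin m → Matrix (Fin n) (Fin n) ℝ) (C : Fin p → Matrix (Fin n) (Fin n) ℝ)
    (hA : A.IsSymm) (hB : ∀ i, (B i).IsSymm) (hC : ∀ j, (C j).IsSymm)
    (α : Fin m → ℝ) (θ β : Fin p → ℝ) (hβ : ∀ j, 0 < β j) (f : Fin n → ℝ)
    (τ : Fin m → ℝ) (σ : Fin p → ℝ) (hτ : ∀ i, 0 < τ i)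
    (hG : IsUnit (Gmat A B C τ σ).det)
    (x : Fin n → ℝ) (hx : x = (Gmat A B C τ σ)⁻¹ *ᵥ f)
    (h1 : ∀ i, (1/2) * (x ⬝ᵥ (B i *ᵥ x)) - α i = Real.log (τ i))
    (h2 : ∀ j, β j * ((1/2) * (x ⬝ᵥ (C j *ᵥ x)) - θ j) = σ j) :
    HasFDerivAt (PiFun A B C α θ β f) (0 : (Fin n → ℝ) →L[ℝ] ℝ) x :=
  stmt_7_general A B C hA hB hC α θ β f τ σ hτ hG x hx h1 h2
end

section
/- (Global optimality via canonical duality) Suppose ς̄ = (τ̄, σ̄) with τ̄_i > 0, G(ς̄) ≻ 0 (positive definite), and x̄ = G(ς̄)⁻¹f satisfies ½x̄ᵗB_ix̄ − α_i = ln τ̄_i and σ̄_j = β_j(½x̄ᵗC_jx̄ − θ_j). Then x̄ is the unique global minimizer of Π over ℝ^n: for every x ≠ x̄, Π(x) > Π(x̄). -/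
/-!
For `τ > 0` and `β > 0`, the Fenchel–Young inequalities for `exp` (whose conjugate is
`t ↦ t log t - t`) and for `v ↦ β v² / 2` (whose conjugate is `s ↦ s² / (2β)`) give
`Ξ(·, ς̄) ≤ Π`, and the two hypotheses on `x̄` are exactly their equality cases, so
`Π(x̄) = Ξ(x̄, ς̄)`. As `G(ς̄) ≻ 0` and `G(ς̄) x̄ = f`, the map `x ↦ Ξ(x, ς̄)` is a strictly convex
quadratic minimized only at `x̄`; hence `Π(x̄) = Ξ(x̄, ς̄) < Ξ(x, ς̄) ≤ Π(x)` for `x ≠ x̄`.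
-/

open Matrix Real

namespace Real

theorem fenchel_young_exp {t : ℝ} (ht : 0 < t) (u : ℝ) :
    t * u - (t * log t - t) ≤ exp u := by
  have h := add_one_le_exp (u - log t)
  rw [exp_sub, exp_log ht, le_div_iff₀ ht] at h
  linarith

theorem fenchel_young_sq {b : ℝ} (hb : 0 < b) (s v : ℝ) :
    s * v - s ^ 2 / (2 * b) ≤ b / 2 * v ^ 2 := by
  have h : 0 ≤ (b * v - s) ^ 2 / (2 * b) := by positivity
  have hgap : (b * v - s) ^ 2 / (2 * b) = b / 2 * v ^ 2 - (s * v - s ^ 2 / (2 * b)) := by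
    field_simp
    ring
  linarith

end Real

theorem Matrix.IsSymm.sub_dotProduct_mulVec_sub {ι R : Type*} [Fintype ι] [CommRing R]
    {G : Matrix ι ι R} (hG : G.IsSymm) (x y : ι → R) :
    (y - x) ⬝ᵥ (G *ᵥ (y - x)) = y ⬝ᵥ (G *ᵥ y) - 2 * ((G *ᵥ x) ⬝ᵥ y) + x ⬝ᵥ (G *ᵥ x) := by
  have hxy : x ⬝ᵥ (G *ᵥ y) = (G *ᵥ x) ⬝ᵥ y := by
    rw [dotProduct_mulVec, ← mulVec_transpose, hG.eq]
  rw [mulVec_sub, dotProduct_sub, sub_dotProduct, sub_dotProduct, hxy, dotProduct_comm y (G *ᵥ x)]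
  ring

theorem Matrix.PosDef.quadratic_lt_of_mulVec_eq {ι : Type*} [Fintype ι] {G : Matrix ι ι ℝ}
    (hG : G.PosDef) {x f : ι → ℝ} (hx : G *ᵥ x = f) {y : ι → ℝ} (hy : y ≠ x) :
    1 / 2 * (x ⬝ᵥ (G *ᵥ x)) - f ⬝ᵥ x < 1 / 2 * (y ⬝ᵥ (G *ᵥ y)) - f ⬝ᵥ y := by
  subst hx
  have hpos := hG.dotProduct_mulVec_pos (sub_ne_zero.mpr hy)
  rw [star_trivial, (isHermitian_iff_isSymm.mp hG.isHermitian).sub_dotProduct_mulVec_sub] at hpos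
  linarith [dotProduct_comm (G *ᵥ x) x]

section CanonicalDuality

variable {n m p : ℕ} {A : Matrix (Fin n) (Fin n) ℝ}
    {B : Fin m → Matrix (Fin n) (Fin n) ℝ} {C : Fin p → Matrix (Fin n) (Fin n) ℝ}
    {α : Fin m → ℝ} {θ β : Fin p → ℝ} {f : Fin n → ℝ} {τ : Fin m → ℝ} {σ : Fin p → ℝ}

theorem dotProduct_Gmat_mulVec (z : Fin n → ℝ) :
    z ⬝ᵥ (Gmat A B C τ σ *ᵥ z) = z ⬝ᵥ (A *ᵥ z) + ∑ i, τ i * (z ⬝ᵥ (B i *ᵥ z)) +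
      ∑ j, σ j * (z ⬝ᵥ (C j *ᵥ z)) := by
  simp only [Gmat, add_mulVec, sum_mulVec, smul_mulVec, dotProduct_add, dotProduct_sum,
    dotProduct_smul, smul_eq_mul]

theorem PiFun_sub_XiFun (z : Fin n → ℝ) :
    PiFun A B C α θ β f z - XiFun A B C α θ β f z τ σ =
      (∑ i, (exp (1 / 2 * (z ⬝ᵥ (B i *ᵥ z)) - α i) -
        (τ i * (1 / 2 * (z ⬝ᵥ (B i *ᵥ z)) - α i) - (τ i * log (τ i) - τ i)))) +
      ∑ j, (β j / 2 * (1 / 2 * (z ⬝ᵥ (C j *ᵥ z)) - θ j) ^ 2 -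
        (σ j * (1 / 2 * (z ⬝ᵥ (C j *ᵥ z)) - θ j) - σ j ^ 2 / (2 * β j))) := by
  simp only [PiFun, XiFun, dotProduct_Gmat_mulVec, Finset.sum_sub_distrib, mul_add, mul_sub,
    Finset.mul_sum, mul_comm (α _), mul_comm (θ _)]
  ring_nf

theorem XiFun_le_PiFun (hτ : ∀ i, 0 < τ i) (hβ : ∀ j, 0 < β j) (z : Fin n → ℝ) :
    XiFun A B C α θ β f z τ σ ≤ PiFun A B C α θ β f z := by
  rw [← sub_nonneg, PiFun_sub_XiFun]
  exact add_nonneg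
    (Finset.sum_nonneg fun i _ ↦ sub_nonneg.mpr (fenchel_young_exp (hτ i) _))
    (Finset.sum_nonneg fun j _ ↦ sub_nonneg.mpr (fenchel_young_sq (hβ j) _ _))

theorem PiFun_eq_XiFun (hτ : ∀ i, 0 < τ i) (hβ : ∀ j, 0 < β j) {x : Fin n → ℝ}
    (h1 : ∀ i, 1 / 2 * (x ⬝ᵥ (B i *ᵥ x)) - α i = log (τ i))
    (h2 : ∀ j, σ j = β j * (1 / 2 * (x ⬝ᵥ (C j *ᵥ x)) - θ j)) :
    PiFun A B C α θ β f x = XiFun A B C α θ β f x τ σ := by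
  rw [← sub_eq_zero, PiFun_sub_XiFun]
  have hExp : ∀ i, exp (1 / 2 * (x ⬝ᵥ (B i *ᵥ x)) - α i) =
      τ i * (1 / 2 * (x ⬝ᵥ (B i *ᵥ x)) - α i) - (τ i * log (τ i) - τ i) := fun i ↦ by
    rw [h1, exp_log (hτ i)]
    ring
  have hSq : ∀ j, β j / 2 * (1 / 2 * (x ⬝ᵥ (C j *ᵥ x)) - θ j) ^ 2 =
      σ j * (1 / 2 * (x ⬝ᵥ (C j *ᵥ x)) - θ j) - σ j ^ 2 / (2 * β j) := fun j ↦ by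
    rw [h2]
    field_simp [(hβ j).ne']
    ring
  simp only [hExp, hSq, sub_self, Finset.sum_const_zero, add_zero]

theorem XiFun_lt_XiFun (hG : (Gmat A B C τ σ).PosDef) {x : Fin n → ℝ}
    (hx : Gmat A B C τ σ *ᵥ x = f) {y : Fin n → ℝ} (hy : y ≠ x) :
    XiFun A B C α θ β f x τ σ < XiFun A B C α θ β f y τ σ := by
  simp only [XiFun]
  linarith [hG.quadratic_lt_of_mulVec_eq hx hy]

end CanonicalDuality

theorem stmt_10_general {n m p : ℕ} (A : Matrix (Fin n) (Fin n) ℝ)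
    (B : Fin m → Matrix (Fin n) (Fin n) ℝ) (C : Fin p → Matrix (Fin n) (Fin n) ℝ)
    (α : Fin m → ℝ) (θ β : Fin p → ℝ) (hβ : ∀ j, 0 < β j) (f : Fin n → ℝ)
    (τ : Fin m → ℝ) (σ : Fin p → ℝ) (hτ : ∀ i, 0 < τ i)
    (hG : (Gmat A B C τ σ).PosDef)
    (x : Fin n → ℝ) (hx : x = (Gmat A B C τ σ)⁻¹ *ᵥ f)
    (h1 : ∀ i, (1/2) * (x ⬝ᵥ (B i *ᵥ x)) - α i = Real.log (τ i))
    (h2 : ∀ j, σ j = β j * ((1/2) * (x ⬝ᵥ (C j *ᵥ x)) - θ j)) :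
    ∀ y : Fin n → ℝ, y ≠ x →
      PiFun A B C α θ β f x < PiFun A B C α θ β f y := by
  intro y hy
  have hGx : Gmat A B C τ σ *ᵥ x = f := by
    rw [hx, mulVec_mulVec, mul_nonsing_inv _ ((isUnit_iff_isUnit_det _).mp hG.isUnit),
      one_mulVec]
  calc PiFun A B C α θ β f x = XiFun A B C α θ β f x τ σ := PiFun_eq_XiFun hτ hβ h1 h2
    _ < XiFun A B C α θ β f y τ σ := XiFun_lt_XiFun hG hGx hy
    _ ≤ PiFun A B C α θ β f y := XiFun_le_PiFun hτ hβ y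

theorem stmt_10 {n m p : ℕ} (A : Matrix (Fin n) (Fin n) ℝ)
    (B : Fin m → Matrix (Fin n) (Fin n) ℝ) (C : Fin p → Matrix (Fin n) (Fin n) ℝ)
    (hA : A.IsSymm) (hB : ∀ i, (B i).IsSymm) (hC : ∀ j, (C j).IsSymm)
    (α : Fin m → ℝ) (θ β : Fin p → ℝ) (hβ : ∀ j, 0 < β j) (f : Fin n → ℝ)
    (τ : Fin m → ℝ) (σ : Fin p → ℝ) (hτ : ∀ i, 0 < τ i)
    (hG : (Gmat A B C τ σ).PosDef)
    (x : Fin n → ℝ) (hx : x = (Gmat A B C τ σ)⁻¹ *ᵥ f)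
    (h1 : ∀ i, (1/2) * (x ⬝ᵥ (B i *ᵥ x)) - α i = Real.log (τ i))
    (h2 : ∀ j, σ j = β j * ((1/2) * (x ⬝ᵥ (C j *ᵥ x)) - θ j)) :
    ∀ y : Fin n → ℝ, y ≠ x →
      PiFun A B C α θ β f x < PiFun A B C α θ β f y :=
  stmt_10_general A B C α θ β hβ f τ σ hτ hG x hx h1 h2
end

section
/- Let G ∈ ℝ^{n×n} be symmetric negative definite, D ∈ ℝ^{k×k} symmetric positive definite, and F ∈ ℝ^{n×k} arbitrary. Then −Fᵗ G⁻¹ F − D⁻¹ ⪯ 0 if and only if G + F D Fᵗ ⪯ 0. -/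
/-!
Both conditions are Schur-complement conditions for the same symmetric block matrix
`[[-G, F], [Fᵀ, D⁻¹]]`: eliminating the positive definite block `-G` gives
`D⁻¹ + Fᵀ G⁻¹ F ⪰ 0`, eliminating the positive definite block `D⁻¹` gives `-G - F D Fᵀ ⪰ 0`,
and each is equivalent to positive semidefiniteness of the block matrix.
-/

open Matrix

namespace Matrix

variable {m n K : Type*} [Fintype m] [Fintype n] [DecidableEq m] [DecidableEq n]

theorem inv_neg [CommRing K] (A : Matrix n n K) : (-A)⁻¹ = -A⁻¹ := by
  by_cases hA : IsUnit A.det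
  · refine inv_eq_left_inv ?_
    rw [neg_mul_neg, nonsing_inv_mul _ hA]
  · have hnegA : ¬IsUnit (-A).det := by
      rwa [det_neg, IsUnit.mul_iff, not_and_or, or_iff_right (not_not.mpr (isUnit_neg_one.pow _))]
    rw [nonsing_inv_apply_not_isUnit _ hA, nonsing_inv_apply_not_isUnit _ hnegA, neg_zero]

theorem PosDef.posSemidef_schur_complement_iff [Field K] [PartialOrder K] [StarRing K]
    [StarOrderedRing K] {A : Matrix m m K} {D : Matrix n n K} (B : Matrix m n K)
    (hA : A.PosDef) (hD : D.PosDef) :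
    (D - Bᴴ * A⁻¹ * B).PosSemidef ↔ (A - B * D⁻¹ * Bᴴ).PosSemidef := by
  have := hA.isUnit.invertible
  have := hD.isUnit.invertible
  exact (PosDef.fromBlocks₁₁ B D hA).symm.trans (PosDef.fromBlocks₂₂ A B hD)

end Matrix

theorem stmt_12 {n k : ℕ} (G : Matrix (Fin n) (Fin n) ℝ)
    (D : Matrix (Fin k) (Fin k) ℝ) (F : Matrix (Fin n) (Fin k) ℝ)
    (hG : (-G).PosDef) (hD : D.PosDef) :
    (Fᵀ * G⁻¹ * F + D⁻¹).PosSemidef ↔ (-(G + F * D * Fᵀ)).PosSemidef := by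
  have hschur := PosDef.posSemidef_schur_complement_iff F hG hD.inv
  rwa [conjTranspose_eq_transpose_of_trivial, Matrix.inv_neg,
    nonsing_inv_nonsing_inv D (D.isUnit_iff_isUnit_det.mp hD.isUnit),
    Matrix.mul_neg, Matrix.neg_mul, sub_neg_eq_add, add_comm, sub_eq_add_neg, ← neg_add] at hschur
end

section
/- Let G ∈ ℝ^{n×n} be symmetric negative definite, D ∈ ℝ^{k×k} symmetric positive definite with k < n, and F ∈ ℝ^{n×k} with −FᵗG⁻¹F − D⁻¹ ⪰ 0. Then G + F D Fᵗ is not positive semidefinite. -/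
/-! A negative definite `G` can be pushed to a positive semidefinite matrix only by a positive
definite correction, but `F * D * Fᵀ` has rank at most `k < n`. -/

open Matrix

namespace Matrix

theorem card_le_card_of_posDef_mul {m l K : Type*} [Fintype m] [Fintype l] [DecidableEq m]
    [Field K] [PartialOrder K] [StarRing K] {A : Matrix m l K} {B : Matrix l m K}
    (h : (A * B).PosDef) : Fintype.card m ≤ Fintype.card l :=
  calc Fintype.card m = (A * B).rank := (rank_of_isUnit _ h.isUnit).symm
    _ ≤ A.rank := rank_mul_le_left A B
    _ ≤ Fintype.card l := rank_le_card_width A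

end Matrix

theorem stmt_14_general {n k : ℕ} (G : Matrix (Fin n) (Fin n) ℝ)
    (D : Matrix (Fin k) (Fin k) ℝ) (F : Matrix (Fin n) (Fin k) ℝ)
    (hG : (-G).PosDef) (hk : k < n) :
    ¬ (G + F * D * Fᵀ).PosSemidef := by
  intro hP
  have hFDF : (F * D * Fᵀ).PosDef := by
    simpa using PosDef.posSemidef_add hP hG
  exact hk.not_ge (by simpa using card_le_card_of_posDef_mul hFDF)

theorem stmt_14 {n k : ℕ} (G : Matrix (Fin n) (Fin n) ℝ)
    (D : Matrix (Fin k) (Fin k) ℝ) (F : Matrix (Fin n) (Fin k) ℝ)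
    (hG : (-G).PosDef) (hD : D.PosDef) (hk : k < n)
    (h : (-(Fᵀ * G⁻¹ * F) - D⁻¹).PosSemidef) :
    ¬ (G + F * D * Fᵀ).PosSemidef :=
  stmt_14_general G D F hG hk
end

section
/- For τ ranging over positive reals and σ over ℝ, the function Π^d(τ, σ) = −½ fᵗG(τ,σ)⁻¹f − (τ ln τ − τ) − σ²/(2β) − ατ − θσ is strictly concave on any convex subset of the region where G(τ,σ) = A + τB + σC is positive definite, provided B, C ⪰ 0 and f ∈ ℝ^n, β > 0. -/
open Matrix Real

/-!
The matrix-fractional term is convex in `G`: for positive definite `M`,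
`f ⬝ᵥ M⁻¹ *ᵥ f = max_x (2 f ⬝ᵥ x - x ⬝ᵥ M *ᵥ x)` is a maximum of functions affine in `M`, and
`G(τ, σ)` is affine in `(τ, σ)`. The remaining terms `τ log τ + σ² / (2β)` are strictly convex in
`τ` and in `σ` separately, hence strictly convex in the pair, and the rest is linear.
-/

section ConvexAnalysis

variable {𝕜 E F β : Type*}

theorem StrictConvexOn.smul [CommSemiring 𝕜] [PartialOrder 𝕜] [AddCommMonoid E]
    [AddCommMonoid β] [PartialOrder β] [SMul 𝕜 E] [Module 𝕜 β] [PosSMulStrictMono 𝕜 β]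
    {s : Set E} {f : E → β} {c : 𝕜} (hc : 0 < c) (hf : StrictConvexOn 𝕜 s f) :
    StrictConvexOn 𝕜 s fun x => c • f x :=
  ⟨hf.1, fun x hx y hy hxy a b ha hb hab =>
    calc
      c • f (a • x + b • y) < c • (a • f x + b • f y) :=
        smul_lt_smul_of_pos_left (hf.2 hx hy hxy ha hb hab) hc
      _ = a • c • f x + b • c • f y := by rw [smul_add, smul_comm c, smul_comm c]⟩

theorem StrictConvexOn.prod_add [Semiring 𝕜] [PartialOrder 𝕜] [AddCommMonoid E] [AddCommMonoid F]
    [AddCommMonoid β] [PartialOrder β] [IsOrderedCancelAddMonoid β]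
    [Module 𝕜 E] [Module 𝕜 F] [Module 𝕜 β]
    {s : Set E} {t : Set F} {φ : E → β} {ψ : F → β}
    (hφ : StrictConvexOn 𝕜 s φ) (hψ : StrictConvexOn 𝕜 t ψ) :
    StrictConvexOn 𝕜 (s ×ˢ t) fun p => φ p.1 + ψ p.2 := by
  refine ⟨hφ.1.prod hψ.1, fun x hx y hy hxy a b ha hb hab => ?_⟩
  have hsplit : a • (φ x.1 + ψ x.2) + b • (φ y.1 + ψ y.2) =
      (a • φ x.1 + b • φ y.1) + (a • ψ x.2 + b • ψ y.2) := by
    simp only [smul_add]; abel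
  simp only [Prod.fst_add, Prod.snd_add, Prod.smul_fst, Prod.smul_snd, hsplit]
  obtain h₁ | h₁ := ne_or_eq x.1 y.1
  · exact add_lt_add_of_lt_of_le (hφ.2 hx.1 hy.1 h₁ ha hb hab)
      (hψ.convexOn.2 hx.2 hy.2 ha.le hb.le hab)
  · have h₂ : x.2 ≠ y.2 := fun h₂ => hxy (Prod.ext h₁ h₂)
    exact add_lt_add_of_le_of_lt (hφ.convexOn.2 hx.1 hy.1 ha.le hb.le hab)
      (hψ.2 hx.2 hy.2 h₂ ha hb hab)

end ConvexAnalysis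

namespace Matrix

theorem convex_setOf_posDef {ι : Type*} : Convex ℝ {M : Matrix ι ι ℝ | M.PosDef} := by
  intro M hM N hN a b ha hb hab
  obtain ha | rfl := ha.lt_or_eq
  · exact (hM.smul ha).add_posSemidef (hN.posSemidef.smul hb)
  · rw [zero_add] at hab
    subst hab
    simpa using hN

variable {ι : Type*} [Fintype ι] [DecidableEq ι]

theorem PosDef.isGreatest_dotProduct_inv_mulVec {M : Matrix ι ι ℝ} (hM : M.PosDef) (f : ι → ℝ) :
    IsGreatest (Set.range fun x => 2 * (f ⬝ᵥ x) - x ⬝ᵥ (M *ᵥ x)) (f ⬝ᵥ (M⁻¹ *ᵥ f)) := by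
  set u := M⁻¹ *ᵥ f
  have hMu : M *ᵥ u = f := by
    rw [mulVec_mulVec, mul_nonsing_inv _ (isUnit_iff_isUnit_det M |>.mp hM.isUnit), one_mulVec]
  have hsymm : Mᵀ = M := (isHermitian_iff_isSymm.mp hM.isHermitian).eq
  have hcomm (x : ι → ℝ) : u ⬝ᵥ (M *ᵥ x) = f ⬝ᵥ x := by
    rw [dotProduct_mulVec, ← mulVec_transpose, hsymm, hMu]
  refine ⟨⟨u, ?_⟩, ?_⟩
  · simp only [hMu, dotProduct_comm u f]
    ring
  · rintro _ ⟨x, rfl⟩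
    have hnonneg := hM.posSemidef.dotProduct_mulVec_nonneg (x - u)
    simp only [star_trivial, mulVec_sub, dotProduct_sub, sub_dotProduct, hcomm, hMu] at hnonneg
    rw [dotProduct_comm x f, dotProduct_comm u f] at hnonneg
    dsimp only
    linarith

theorem convexOn_dotProduct_inv_mulVec (f : ι → ℝ) :
    ConvexOn ℝ {M : Matrix ι ι ℝ | M.PosDef} fun M => f ⬝ᵥ (M⁻¹ *ᵥ f) := by
  refine ⟨convex_setOf_posDef, fun M hM N hN a b ha hb hab => ?_⟩
  obtain ⟨⟨u, hu⟩, -⟩ :=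
    PosDef.isGreatest_dotProduct_inv_mulVec (convex_setOf_posDef hM hN ha hb hab) f
  have hM' := (PosDef.isGreatest_dotProduct_inv_mulVec hM f).2 ⟨u, rfl⟩
  have hN' := (PosDef.isGreatest_dotProduct_inv_mulVec hN f).2 ⟨u, rfl⟩
  have hsplit : u ⬝ᵥ ((a • M + b • N) *ᵥ u) = a * (u ⬝ᵥ (M *ᵥ u)) + b * (u ⬝ᵥ (N *ᵥ u)) := by
    simp only [add_mulVec, smul_mulVec, dotProduct_add, dotProduct_smul, smul_eq_mul]
  dsimp only at hu hM' hN' ⊢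
  rw [← hu, hsplit, smul_eq_mul, smul_eq_mul]
  have hfu : 2 * (f ⬝ᵥ u) = a * (2 * (f ⬝ᵥ u)) + b * (2 * (f ⬝ᵥ u)) := by
    rw [← add_mul, hab, one_mul]
  linarith [mul_le_mul_of_nonneg_left hM' ha, mul_le_mul_of_nonneg_left hN' hb]

end Matrix

theorem stmt_16_general {n : ℕ} (A B C : Matrix (Fin n) (Fin n) ℝ)
    (β : ℝ) (hβ : 0 < β) (α θ : ℝ) (f : Fin n → ℝ)
    (S : Set (ℝ × ℝ)) (hS : Convex ℝ S)
    (hSsub : S ⊆ {q : ℝ × ℝ | 0 < q.1 ∧ (A + q.1 • B + q.2 • C).PosDef}) :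
    StrictConcaveOn ℝ S (fun q : ℝ × ℝ =>
      -(1/2) * (f ⬝ᵥ ((A + q.1 • B + q.2 • C)⁻¹ *ᵥ f)) -
      (q.1 * Real.log q.1 - q.1) - q.2 ^ 2 / (2 * β) - α * q.1 - θ * q.2) := by
  let G : ℝ × ℝ →ᵃ[ℝ] Matrix (Fin n) (Fin n) ℝ := AffineMap.const ℝ (ℝ × ℝ) A +
    ((LinearMap.fst ℝ ℝ ℝ).smulRight B + (LinearMap.snd ℝ ℝ ℝ).smulRight C).toAffineMap
  have hG (q : ℝ × ℝ) : G q = A + q.1 • B + q.2 • C := by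
    simp [G, add_assoc]
  have hquad : ConvexOn ℝ S fun q => f ⬝ᵥ ((A + q.1 • B + q.2 • C)⁻¹ *ᵥ f) := by
    have hpre : S ⊆ G ⁻¹' {M | M.PosDef} := fun q hq => by simp [hG, (hSsub hq).2]
    exact ((convexOn_dotProduct_inv_mulVec f).comp_affineMap G).subset hpre hS
      |>.congr fun q _ => by simp [hG]
  have hentropy : StrictConvexOn ℝ S fun q => q.1 * Real.log q.1 + (2 * β)⁻¹ • q.2 ^ 2 :=
    (strictConvexOn_mul_log.prod_add
      ((Even.strictConvexOn_pow even_two two_ne_zero).smul (by positivity))).subset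
      (fun q hq => ⟨(hSsub hq).1.le, trivial⟩) hS
  have hlinear : ConvexOn ℝ S fun q : ℝ × ℝ => (α - 1) * q.1 + θ * q.2 :=
    (((α - 1) • LinearMap.fst ℝ ℝ ℝ + θ • LinearMap.snd ℝ ℝ ℝ).convexOn hS).congr
      fun q _ => by simp
  have hsum := ((hquad.smul (by norm_num : (0 : ℝ) ≤ 1 / 2)).add_strictConvexOn hentropy)
    |>.add_convexOn hlinear
  refine hsum.neg.congr fun q _ => ?_
  simp only [Pi.add_apply, Pi.neg_apply, smul_eq_mul]
  ring

theorem stmt_16 {n : ℕ} (A B C : Matrix (Fin n) (Fin n) ℝ)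
    (hA : A.IsSymm) (hB : B.PosSemidef) (hC : C.PosSemidef)
    (β : ℝ) (hβ : 0 < β) (α θ : ℝ) (f : Fin n → ℝ)
    (S : Set (ℝ × ℝ)) (hS : Convex ℝ S)
    (hSsub : S ⊆ {q : ℝ × ℝ | 0 < q.1 ∧ (A + q.1 • B + q.2 • C).PosDef}) :
    StrictConcaveOn ℝ S (fun q : ℝ × ℝ =>
      -(1/2) * (f ⬝ᵥ ((A + q.1 • B + q.2 • C)⁻¹ *ᵥ f)) -
      (q.1 * Real.log q.1 - q.1) - q.2 ^ 2 / (2 * β) - α * q.1 - θ * q.2) :=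
  stmt_16_general A B C β hβ α θ f S hS hSsub
end
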